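/- Let R be a left and right noetherian ring and let f: M → N be a morphism of finitely generated Gorenstein projective right R-modules. If Ext^1(X,f): Ext^1_R(X,M) → Ext^1_R(X,N) is zero for every finitely generated Gorenstein projective right R-module X, then f factors through a finitely generated projective right R-module; that is, given a short exact sequence 0 → M → Q → Ω⁻¹M → 0 with Q projective and Ω⁻¹M finitely generated Gorenstein projective, f factors through Q. -/

import Mathlib

open CategoryTheory Opposite TensorProduct

noncomputable section

/-! ### The tensor product `M ⊗_R Y` of a right `R`-module `M` and a left `R`-module `Y`,
and the Tor functors `Tor_i(-, Y)`, defined as left derived functors of `- ⊗_R Y`.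

Right `R`-modules are regarded as left modules over the opposite ring `Rᵐᵒᵖ`. -/

variable (R : Type) [Ring R]

/-- The subgroup of balancing relations `(m · r) ⊗ y - m ⊗ (r · y)` in `M ⊗[ℤ] Y`. -/
def torRel (M : Type) [AddCommGroup M] [Module Rᵐᵒᵖ M]
    (Y : Type) [AddCommGroup Y] [Module R Y] : AddSubgroup (M ⊗[ℤ] Y) :=
  AddSubgroup.closure
    {z | ∃ (m : M) (r : R) (y : Y),
      z = (MulOpposite.op r • m) ⊗ₜ[ℤ] y - m ⊗ₜ[ℤ] (r • y)}

variable (Y : Type) [AddCommGroup Y] [Module R Y]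

lemma torRel_le {M M' : Type} [AddCommGroup M] [Module Rᵐᵒᵖ M]
    [AddCommGroup M'] [Module Rᵐᵒᵖ M'] (g : M →ₗ[Rᵐᵒᵖ] M') :
    torRel R M Y ≤ AddSubgroup.comap
      (TensorProduct.map (g.toAddMonoidHom.toIntLinearMap)
        (LinearMap.id (R := ℤ) (M := Y))).toAddMonoidHom (torRel R M' Y) := by
  rw [torRel, AddSubgroup.closure_le]
  rintro z ⟨m, r, y, rfl⟩
  refine AddSubgroup.mem_comap.2 ?_
  have h1 : (TensorProduct.map (g.toAddMonoidHom.toIntLinearMap)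
      (LinearMap.id (R := ℤ) (M := Y))).toAddMonoidHom
      ((MulOpposite.op r • m) ⊗ₜ[ℤ] y - m ⊗ₜ[ℤ] (r • y))
      = (MulOpposite.op r • g m) ⊗ₜ[ℤ] y - (g m) ⊗ₜ[ℤ] (r • y) := by
    simp [map_sub, TensorProduct.map_tmul]
  rw [h1]
  exact AddSubgroup.subset_closure ⟨g m, r, y, rfl⟩

/-- The tensor product `M ⊗_R Y` of a right `R`-module `M` and a left `R`-module `Y`:
the quotient of `M ⊗[ℤ] Y` by the balancing relations. -/
def modTensor (M : Type) [AddCommGroup M] [Module Rᵐᵒᵖ M] : Type :=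
  (M ⊗[ℤ] Y) ⧸ torRel R M Y

instance (M : Type) [AddCommGroup M] [Module Rᵐᵒᵖ M] : AddCommGroup (modTensor R Y M) :=
  QuotientAddGroup.Quotient.addCommGroup _

/-- Functoriality of `- ⊗_R Y` in the first variable. -/
def tmap {M M' : Type} [AddCommGroup M] [Module Rᵐᵒᵖ M]
    [AddCommGroup M'] [Module Rᵐᵒᵖ M'] (g : M →ₗ[Rᵐᵒᵖ] M') :
    modTensor R Y M →+ modTensor R Y M' :=
  QuotientAddGroup.map _ _
    ((TensorProduct.map (g.toAddMonoidHom.toIntLinearMap)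
      (LinearMap.id (R := ℤ) (M := Y))).toAddMonoidHom) (torRel_le R Y g)

lemma tmap_mk {M M' : Type} [AddCommGroup M] [Module Rᵐᵒᵖ M]
    [AddCommGroup M'] [Module Rᵐᵒᵖ M'] (g : M →ₗ[Rᵐᵒᵖ] M') (z : M ⊗[ℤ] Y) :
    tmap R Y g (QuotientAddGroup.mk z)
      = QuotientAddGroup.mk (TensorProduct.map (g.toAddMonoidHom.toIntLinearMap)
        (LinearMap.id (R := ℤ) (M := Y)) z) :=
  rfl

/-- The additive functor `M ↦ M ⊗_R Y` from right `R`-modules to abelian groups,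
for a fixed left `R`-module `Y`. -/
def torTensorFunctor : ModuleCat.{0} Rᵐᵒᵖ ⥤ AddCommGrpCat.{0} where
  obj M := AddCommGrpCat.of (modTensor R Y M)
  map {M M'} g := AddCommGrpCat.ofHom (tmap R Y g.hom)
  map_id M := by
    ext x
    refine QuotientAddGroup.induction_on x (fun z => ?_)
    show tmap R Y (𝟙 M : M ⟶ M).hom (QuotientAddGroup.mk z) = QuotientAddGroup.mk z
    rw [tmap_mk]
    congr 1
    refine TensorProduct.induction_on z rfl (fun a b => rfl) (fun a b ha hb => ?_)
    simp only [map_add, ha, hb]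
  map_comp {M M' M''} g h := by
    ext x
    refine QuotientAddGroup.induction_on x (fun z => ?_)
    show tmap R Y (g ≫ h : M ⟶ M'').hom (QuotientAddGroup.mk z)
      = tmap R Y h.hom (tmap R Y g.hom (QuotientAddGroup.mk z))
    rw [tmap_mk, tmap_mk, tmap_mk]
    congr 1
    refine TensorProduct.induction_on z rfl (fun a b => rfl) (fun a b ha hb => ?_)
    simp only [map_add, ha, hb]

instance : (torTensorFunctor R Y).Additive where
  map_add {M M'} {g g'} := by
    ext x
    refine QuotientAddGroup.induction_on x (fun z => ?_)
    show tmap R Y (g + g').hom (QuotientAddGroup.mk z)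
      = tmap R Y g.hom (QuotientAddGroup.mk z) + tmap R Y g'.hom (QuotientAddGroup.mk z)
    rw [tmap_mk, tmap_mk, tmap_mk]
    show _ = QuotientAddGroup.mk _
    congr 1
    refine TensorProduct.induction_on z (by simp) (fun a b => ?_) (fun a b ha hb => ?_)
    · simp only [TensorProduct.map_tmul]
      show _ = (g a) ⊗ₜ[ℤ] b + (g' a) ⊗ₜ[ℤ] b
      rw [← add_tmul]
      rfl
    · rw [map_add, ha, hb, map_add, map_add]
      beta_reduce
      abel

/-- `Tor_i(-, Y)` : the `i`-th left derived functor of `- ⊗_R Y` on right `R`-modules. -/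
def TorFunctor (i : ℕ) : ModuleCat.{0} Rᵐᵒᵖ ⥤ AddCommGrpCat.{0} :=
  (torTensorFunctor R Y).leftDerived i

/-- The induced map `Tor_i(f, Y) : Tor_i(M, Y) → Tor_i(N, Y)` for `f : M ⟶ N`. -/
def torMap (i : ℕ) {M N : ModuleCat.{0} Rᵐᵒᵖ} (f : M ⟶ N) :
    (TorFunctor R Y i).obj M ⟶ (TorFunctor R Y i).obj N :=
  (TorFunctor R Y i).map f

variable {R Y}

/-! ### Ext -/

/-- The induced map `Ext^i(f, X) : Ext^i_S(N, X) → Ext^i_S(M, X)` for a morphism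
`f : M ⟶ N` of `S`-modules. -/
def extMapLeft {S : Type} [Ring S] (i : ℕ) {M N : ModuleCat.{0} S} (f : M ⟶ N)
    (X : ModuleCat.{0} S) :
    ((Ext ℤ (ModuleCat.{0} S) i).obj (op N)).obj X ⟶
      ((Ext ℤ (ModuleCat.{0} S) i).obj (op M)).obj X :=
  ((Ext ℤ (ModuleCat.{0} S) i).map f.op).app X

/-- The induced map `Ext^i(X, f) : Ext^i_S(X, M) → Ext^i_S(X, N)` for a morphism
`f : M ⟶ N` of `S`-modules. -/
def extMapRight {S : Type} [Ring S] (i : ℕ) (X : ModuleCat.{0} S)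
    {M N : ModuleCat.{0} S} (f : M ⟶ N) :
    ((Ext ℤ (ModuleCat.{0} S) i).obj (op X)).obj M ⟶
      ((Ext ℤ (ModuleCat.{0} S) i).obj (op X)).obj N :=
  ((Ext ℤ (ModuleCat.{0} S) i).obj (op X)).map f

/-! ### Gorenstein projective modules -/

/-- The natural evaluation map from a module `G` to its bidual
`Hom(Hom(G, S), S)`; here `G` is a left `S`-module, its dual `Hom_S(G, S)` is a right
`S`-module (i.e. a module over `Sᵐᵒᵖ`), and the bidual is again a left `S`-module. -/
def evalBidual (S : Type) [Ring S] (G : Type) [AddCommGroup G] [Module S G] :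
    G →ₗ[S] ((G →ₗ[S] S) →ₗ[Sᵐᵒᵖ] S) where
  toFun g :=
    { toFun := fun φ => φ g
      map_add' := fun φ ψ => rfl
      map_smul' := fun s φ => rfl }
  map_add' g g' := by ext φ; simp
  map_smul' s g := by ext φ; simp

/-- A (left) `S`-module `G` is Gorenstein projective (equivalently, of G-dimension zero) if
it is reflexive (the evaluation map to its bidual is bijective), and
`Ext^i_S(G, S) = 0 = Ext^i_{Sᵐᵒᵖ}(G*, S)` for all `i > 0`, where `G* = Hom_S(G, S)`.
Right `R`-modules are handled by taking `S := Rᵐᵒᵖ`. -/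
def IsGProj (S : Type) [Ring S] (G : ModuleCat.{0} S) : Prop :=
  Function.Bijective (evalBidual S G) ∧
  (∀ i : ℕ, 0 < i →
    Subsingleton (((Ext ℤ (ModuleCat.{0} S) i).obj (op G)).obj (ModuleCat.of S S))) ∧
  (∀ i : ℕ, 0 < i →
    Subsingleton (((Ext ℤ (ModuleCat.{0} Sᵐᵒᵖ) i).obj
      (op (ModuleCat.of Sᵐᵒᵖ (G →ₗ[S] S)))).obj (ModuleCat.of Sᵐᵒᵖ S)))

/-! ### Injective dimension -/

/-- The injective dimension of an `S`-module `A` is at most `n` : there is an injective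
resolution of `A` vanishing in degrees `> n`. -/
def injDimLE (S : Type) [Ring S] (A : ModuleCat.{0} S) (n : ℕ) : Prop :=
  ∃ I : InjectiveResolution A, ∀ k : ℕ, n < k → Limits.IsZero (I.cocomplex.X k)

/-!
Compute `Ext¹(Ω⁻¹M, -)` with a projective resolution `P` of `Ω⁻¹M`. Lifting `P₀ → Ω⁻¹M` along
`Q → Ω⁻¹M` gives `q₀ : P₀ → Q` and then `q₁ : P₁ → M`, a `1`-cocycle representing the class of
`0 → M → Q → Ω⁻¹M → 0`. As `Ext¹(Ω⁻¹M, f) = 0`, the cocycle `f ∘ q₁` is a coboundary `h₀ ∘ d₁`.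
The rows `P₁ → P₀ → Ω⁻¹M → 0` and `M → Q → Ω⁻¹M → 0` have the same cokernel, so `Q` is the
pushout of `P₀ ← P₁ → M`, and `(h₀, f)` glues to `h : Q → N` with `h ∘ u = f`.
-/

universe u v

lemma LinearMap.exists_comp_eq_of_surjective_of_ker_le {R M N P : Type*} [Ring R]
    [AddCommGroup M] [Module R M] [AddCommGroup N] [Module R N] [AddCommGroup P] [Module R P]
    {g : M →ₗ[R] N} (hg : Function.Surjective g) {f : M →ₗ[R] P} (hgf : ker g ≤ ker f) :
    ∃ h : N →ₗ[R] P, h ∘ₗ g = f :=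
  ⟨(ker g).liftQ f hgf ∘ₗ (g.quotKerEquivOfSurjective hg).symm.toLinearMap, by
    ext x
    have : (g.quotKerEquivOfSurjective hg).symm (g x) = Submodule.Quotient.mk x :=
      (LinearEquiv.symm_apply_eq _).2 rfl
    simp [this]⟩

namespace CategoryTheory.ShortComplex

lemma iCycles_comp_τ₂_comp_pOpcycles_eq_zero {C : Type*} [Category C] [Limits.HasZeroMorphisms C]
    {S₁ S₂ : ShortComplex C} [S₁.HasHomology] [S₂.HasHomology] (φ : S₁ ⟶ S₂)
    (hφ : homologyMap φ = 0) : S₁.iCycles ≫ φ.τ₂ ≫ S₂.pOpcycles = 0 := by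
  rw [← cyclesMap_i_assoc, ← homology_π_ι, ← homologyπ_naturality_assoc, hφ, Limits.zero_comp,
    Limits.comp_zero]

lemma moduleCat_τ₂_mem_range_of_homologyMap_eq_zero {R : Type u} [Ring R]
    {S₁ S₂ : ShortComplex (ModuleCat.{v} R)} (φ : S₁ ⟶ S₂) (hφ : homologyMap φ = 0)
    {x : S₁.X₂} (hx : S₁.g x = 0) : φ.τ₂ x ∈ LinearMap.range S₂.f.hom := by
  rw [← S₂.moduleCat_pOpcycles_eq_zero_iff]
  let c := S₁.moduleCatCyclesIso.inv ⟨x, hx⟩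
  have hc : S₁.iCycles c = x := ConcreteCategory.congr_hom S₁.moduleCatCyclesIso_inv_iCycles _
  simpa [hc] using ConcreteCategory.congr_hom (iCycles_comp_τ₂_comp_pOpcycles_eq_zero φ hφ) c

end CategoryTheory.ShortComplex

lemma HomologicalComplex.mem_range_d_of_homologyMap_eq_zero {R : Type u} [Ring R] {ι : Type*}
    {c : ComplexShape ι} {K L : HomologicalComplex (ModuleCat.{v} R) c} (φ : K ⟶ L)
    {i j k : ι} (hi : c.prev j = i) (hk : c.next j = k) (hφ : homologyMap φ j = 0)
    {x : K.X j} (hx : K.d j k x = 0) : φ.f j x ∈ LinearMap.range (L.d i j).hom := by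
  subst hi hk
  exact ShortComplex.moduleCat_τ₂_mem_range_of_homologyMap_eq_zero _ hφ hx

section Ext

variable {C : Type*} [Category C] [Abelian C]

def ChainComplex.linearYonedaObjMap (K : ChainComplex C ℕ) (R : Type*) [Ring R] [Linear R C]
    {M N : C} (f : M ⟶ N) : K.linearYonedaObj R M ⟶ K.linearYonedaObj R N :=
  (HomologicalComplex.unopFunctor _ _).map
    ((NatTrans.mapHomologicalComplex (NatTrans.rightOp ((linearYoneda R C).map f)) _).app K).op

variable [EnoughProjectives C] {R : Type*} [Ring R] [Linear R C]

lemma CategoryTheory.ProjectiveResolution.isoExt_hom_naturality {X : C}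
    (P : ProjectiveResolution X) (n : ℕ) {M N : C} (f : M ⟶ N) :
    ((Ext R C n).obj (op X)).map f ≫ (P.isoExt n N).hom =
      (P.isoExt n M).hom ≫ HomologicalComplex.homologyMap (P.complex.linearYonedaObjMap R f) n := by
  let α := NatTrans.rightOp ((linearYoneda R C).map f)
  have derived : CommSq (P.isoLeftDerivedObj _ n).hom ((NatTrans.leftDerived α n).app X)
      ((HomologicalComplex.homologyFunctor _ _ n).map
        ((NatTrans.mapHomologicalComplex α _).app P.complex))
      (P.isoLeftDerivedObj _ n).hom :=
    ⟨by rw [P.leftDerived_app_eq, Category.assoc, Category.assoc, Iso.inv_hom_id,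
      Category.comp_id]⟩
  have homology := CommSq.mk (HomologicalComplex.homologyOp_hom_naturality
    (P.complex.linearYonedaObjMap R f) n).symm
  exact (derived.horiz_inv.unop.horiz_comp homology.horiz_inv.unop).w.symm

lemma CategoryTheory.ProjectiveResolution.exists_d_comp_eq_comp_of_ext_map_eq_zero {X M N : C}
    (P : ProjectiveResolution X) {n : ℕ} {f : M ⟶ N}
    (hf : ((Ext R C (n + 1)).obj (op X)).map f = 0) {g : P.complex.X (n + 1) ⟶ M}
    (hg : P.complex.d (n + 2) (n + 1) ≫ g = 0) :
    ∃ h : P.complex.X n ⟶ N, P.complex.d (n + 1) n ≫ h = g ≫ f := by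
  have hφ : HomologicalComplex.homologyMap (P.complex.linearYonedaObjMap R f) (n + 1) = 0 := by
    rw [← cancel_epi (P.isoExt (n + 1) M).hom, ← P.isoExt_hom_naturality, hf, Limits.zero_comp,
      Limits.comp_zero]
  exact HomologicalComplex.mem_range_d_of_homologyMap_eq_zero _ (by simp) (by simp) hφ (x := g) hg

end Ext

namespace ModuleCat

variable {R : Type u} [Ring R]

-- The left square of `φ` is a pushout, since `φ.τ₃` identifies the cokernels of `T.f` and `S.f`.
lemma exists_f_comp_eq_of_hom_of_shortExact {T S : ShortComplex (ModuleCat.{v} R)}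
    (hT : T.Exact) [Epi T.g] (hS : S.ShortExact) (φ : T ⟶ S) [IsIso φ.τ₃]
    {N : ModuleCat.{v} R} {f : S.X₁ ⟶ N} {h₀ : T.X₂ ⟶ N} (hh₀ : T.f ≫ h₀ = φ.τ₁ ≫ f) :
    ∃ h : S.X₂ ⟶ N, S.f ≫ h = f := by
  have hτ₃ : Function.Bijective φ.τ₃ := ConcreteCategory.bijective_of_isIso _
  have hTg : Function.Surjective T.g := (ModuleCat.epi_iff_surjective _).1 inferInstance
  have hSexact := (ShortComplex.ShortExact.moduleCat_exact_iff_function_exact S).1 hS.exact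
  have hSf : Function.Injective S.f := hS.moduleCat_injective_f
  have comm₁₂ (z : T.X₁) : φ.τ₂ (T.f z) = S.f (φ.τ₁ z) := by
    simpa using (ConcreteCategory.congr_hom φ.comm₁₂ z).symm
  have comm₂₃ (y : T.X₂) : φ.τ₃ (T.g y) = S.g (φ.τ₂ y) := by
    simpa using (ConcreteCategory.congr_hom φ.comm₂₃ y).symm
  have surj : Function.Surjective (φ.τ₂.hom.coprod S.f.hom) := by
    intro x
    obtain ⟨y, hy⟩ := (hτ₃.2.comp hTg) (S.g x)
    obtain ⟨m, hm⟩ := (hSexact (x - φ.τ₂ y)).1 (by simp [map_sub, ← comm₂₃, ← hy])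
    exact ⟨(y, m), by simp [hm]⟩
  have ker_le :
      LinearMap.ker (φ.τ₂.hom.coprod S.f.hom) ≤ LinearMap.ker (h₀.hom.coprod f.hom) := by
    rintro ⟨y, m⟩ hym
    replace hym : φ.τ₂ y + S.f m = 0 := hym
    have hy : T.g y = 0 := hτ₃.1 (by
      rw [comm₂₃, map_zero, eq_neg_of_add_eq_zero_left hym, map_neg, hSexact.apply_apply_eq_zero,
        neg_zero])
    obtain ⟨z, rfl⟩ := (ShortComplex.moduleCat_exact_iff _).1 hT y hy
    have hm : m = -φ.τ₁ z :=
      hSf (by rw [map_neg, ← comm₁₂]; exact eq_neg_of_add_eq_zero_right hym)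
    have hz : h₀ (T.f z) = f (φ.τ₁ z) := by simpa using ConcreteCategory.congr_hom hh₀ z
    simp [hm, hz]
  obtain ⟨h, hh⟩ := LinearMap.exists_comp_eq_of_surjective_of_ker_le surj ker_le
  exact ⟨ofHom h, by ext m; simpa using LinearMap.congr_fun hh (0, m)⟩

lemma exists_f_comp_eq_of_ext_one_map_eq_zero {S : ShortComplex (ModuleCat.{u} R)}
    (hS : S.ShortExact) {N : ModuleCat.{u} R} {f : S.X₁ ⟶ N}
    (hf : ((Ext ℤ (ModuleCat.{u} R) 1).obj (op S.X₃)).map f = 0) :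
    ∃ h : S.X₂ ⟶ N, S.f ≫ h = f := by
  have : Mono S.f := hS.mono_f
  have : Epi S.g := hS.epi_g
  let P := ProjectiveResolution.of S.X₃
  let π₀ : P.complex.X 0 ⟶ S.X₃ := P.π.f 0
  let q₀ := Projective.factorThru π₀ S.g
  have hq₀ : q₀ ≫ S.g = π₀ := Projective.factorThru_comp _ _
  let q₁ := hS.exact.lift (P.complex.d 1 0 ≫ q₀)
    (by rw [Category.assoc, hq₀]; exact P.complex_d_comp_π_f_zero)
  have hq₁ : q₁ ≫ S.f = P.complex.d 1 0 ≫ q₀ := hS.exact.lift_f _ _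
  have hcocycle : P.complex.d 2 1 ≫ q₁ = 0 := by
    rw [← cancel_mono S.f, Category.assoc, hq₁, HomologicalComplex.d_comp_d_assoc,
      Limits.zero_comp, Limits.zero_comp]
  obtain ⟨h₀, hh₀⟩ := P.exists_d_comp_eq_comp_of_ext_map_eq_zero hf hcocycle
  let φ : ShortComplex.mk _ _ P.complex_d_comp_π_f_zero ⟶ S :=
    { τ₁ := q₁, τ₂ := q₀, τ₃ := 𝟙 _, comm₁₂ := hq₁
      comm₂₃ := by rw [hq₀]; exact (Category.comp_id π₀).symm }
  have : IsIso φ.τ₃ := by dsimp [φ]; infer_instance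
  exact exists_f_comp_eq_of_hom_of_shortExact P.exact₀ hS φ hh₀

end ModuleCat

theorem factors_through_projective_of_ext1_covariant_vanishes_gp_general
    (R : Type) [Ring R]
    (M N : ModuleCat.{0} Rᵐᵒᵖ) (f : M ⟶ N)
    (hyp : (∀ X : ModuleCat.{0} Rᵐᵒᵖ, Module.Finite Rᵐᵒᵖ X → IsGProj Rᵐᵒᵖ X → extMapRight 1 X f = 0))
    (Q ΩM : ModuleCat.{0} Rᵐᵒᵖ) (u : M ⟶ Q) (p : Q ⟶ ΩM)
    (hΩfin : Module.Finite Rᵐᵒᵖ ΩM) (hΩ : IsGProj Rᵐᵒᵖ ΩM)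
    (hu : Function.Injective u) (hp : Function.Surjective p)
    (hexact : Function.Exact u p) :
    ∃ h : Q ⟶ N, f = u ≫ h := by
  let S := ShortComplex.mk u p (by ext x; exact hexact.apply_apply_eq_zero x)
  obtain ⟨h, hh⟩ := ModuleCat.exists_f_comp_eq_of_ext_one_map_eq_zero
    (ModuleCat.shortComplex_shortExact S hexact hu hp) (hyp ΩM hΩfin hΩ)
  exact ⟨h, hh.symm⟩

/-- Over a left and right noetherian ring, if `Ext^1(X, f) = 0` for all
finitely generated Gorenstein projective `X`, then `f` factors through (the projective
module of) any cosyzygy sequence `0 → M → Q → Ω⁻¹M → 0` of `M`. -/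
theorem factors_through_projective_of_ext1_covariant_vanishes_gp
    (R : Type) [Ring R] [IsNoetherianRing R] [IsNoetherianRing Rᵐᵒᵖ]
    (M N : ModuleCat.{0} Rᵐᵒᵖ) [Module.Finite Rᵐᵒᵖ M] [Module.Finite Rᵐᵒᵖ N] (hM : IsGProj Rᵐᵒᵖ M) (hN : IsGProj Rᵐᵒᵖ N) (f : M ⟶ N)
    (hyp : (∀ X : ModuleCat.{0} Rᵐᵒᵖ, Module.Finite Rᵐᵒᵖ X → IsGProj Rᵐᵒᵖ X → extMapRight 1 X f = 0))
    (Q ΩM : ModuleCat.{0} Rᵐᵒᵖ) (u : M ⟶ Q) (p : Q ⟶ ΩM)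
    (hQfin : Module.Finite Rᵐᵒᵖ Q) (hQ : Module.Projective Rᵐᵒᵖ Q)
    (hΩfin : Module.Finite Rᵐᵒᵖ ΩM) (hΩ : IsGProj Rᵐᵒᵖ ΩM)
    (hu : Function.Injective u) (hp : Function.Surjective p)
    (hexact : Function.Exact u p) :
    ∃ h : Q ⟶ N, f = u ≫ h :=
  factors_through_projective_of_ext1_covariant_vanishes_gp_general R M N f hyp Q ΩM u p hΩfin hΩ hu
    hp hexact

end
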